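/- Let κ be an uncountable regular cardinal with κ^{<κ} = κ and let G be a totally ordered abelian group of degree κ. Then every closed subspace of a G-Polish space is G-Polish. -/

import Mathlib

open Cardinal TopologicalSpace

/-- A `G`-metric on `X`: values in `G⁺ ∪ {0}` with the usual distance axioms. -/
def IsGMetric {X G : Type} [AddCommGroup G] [LinearOrder G] [IsOrderedAddMonoid G] (d : X → X → G) : Prop :=
  (∀ x y, 0 ≤ d x y) ∧ (∀ x y, d x y = 0 ↔ x = y) ∧ (∀ x y, d x y = d y x) ∧
    (∀ x y z, d x z ≤ d x y + d y z)

/-- The topology induced by a `G`-metric, generated by its open balls. -/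
def ballTopology {X G : Type} [AddCommGroup G] [LinearOrder G] [IsOrderedAddMonoid G] (d : X → X → G) :
    TopologicalSpace X :=
  TopologicalSpace.generateFrom {s | ∃ x ε, 0 < ε ∧ s = {y | d x y < ε}}

/-- `d` is Cauchy-complete for `κ`-indexed sequences (`κ` realized by the order `K`). -/
def IsCauchyComplete (K : Type) {X G : Type} [LinearOrder K]
    [AddCommGroup G] [LinearOrder G] [IsOrderedAddMonoid G] (d : X → X → G) : Prop :=
  ∀ x : K → X,
    (∀ ε : G, 0 < ε → ∃ α : K, ∀ β γ : K, α ≤ β → α ≤ γ → d (x β) (x γ) < ε) →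
    ∃ y : X, ∀ ε : G, 0 < ε → ∃ α : K, ∀ β : K, α ≤ β → d (x β) y < ε

/-- `X` is `G`-Polish: weight `≤ κ` and completely `G`-metrizable. -/
def IsGPolish (K G : Type) (X : Type) [LinearOrder K] [AddCommGroup G] [LinearOrder G] [IsOrderedAddMonoid G]
    [t : TopologicalSpace X] : Prop :=
  (∃ B : Set (Set X), TopologicalSpace.IsTopologicalBasis B ∧
      Cardinal.mk B ≤ Cardinal.mk K) ∧
  ∃ d : X → X → G, IsGMetric d ∧ ballTopology d = t ∧ IsCauchyComplete K d

/-!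
The restriction of a `G`-metric to any subset induces the subspace topology, and a basis restricts
to a basis of the same size. Closedness is needed only for completeness: the limit of a Cauchy
sequence from `Y` is a topological limit of points of `Y`, hence lies in `Y`.
-/

open Filter Topology

section GMetric

variable {X Z G : Type} [AddCommGroup G] [LinearOrder G] [IsOrderedAddMonoid G] {d : X → X → G}

theorem IsGMetric.comp (hd : IsGMetric d) {f : Z → X} (hf : Function.Injective f) :
    IsGMetric fun a b => d (f a) (f b) :=
  ⟨fun _ _ => hd.1 _ _, fun _ _ => (hd.2.1 _ _).trans hf.eq_iff, fun _ _ => hd.2.2.1 _ _,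
    fun _ _ _ => hd.2.2.2 _ _ _⟩

/-- A ball of `d` around an arbitrary point is still, after pulling back, the union of the balls
around the points of `f`'s range that it contains. -/
theorem ballTopology_comp (hd : IsGMetric d) (f : Z → X) :
    ballTopology (fun a b => d (f a) (f b)) = (ballTopology d).induced f := by
  rw [ballTopology, ballTopology, induced_generateFrom_eq]
  apply le_antisymm
  · refine le_generateFrom ?_
    rintro _ ⟨_, ⟨x, ε, -, rfl⟩, rfl⟩
    refine (@isOpen_iff_forall_mem_open Z (generateFrom _) _).2 fun y hy => ?_
    have hy : d x (f y) < ε := hy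
    refine ⟨{z | d (f y) (f z) < ε - d x (f y)}, fun z hz => ?_,
      GenerateOpen.basic _ ⟨y, _, sub_pos.2 hy, rfl⟩, ?_⟩
    · calc d x (f z) ≤ d x (f y) + d (f y) (f z) := hd.2.2.2 _ _ _
        _ < ε := lt_sub_iff_add_lt'.1 hz
    · simpa [(hd.2.1 _ _).2 rfl] using hy
  · refine le_generateFrom ?_
    rintro _ ⟨y, ε, hε, rfl⟩
    exact GenerateOpen.basic _ ⟨_, ⟨f y, ε, hε, rfl⟩, rfl⟩

theorem tendsto_ballTopology {ι : Type} {l : Filter ι} {u : ι → X} {y : X} (hd : IsGMetric d)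
    (hu : ∀ ε, 0 < ε → ∀ᶠ i in l, d (u i) y < ε) :
    Tendsto u l (@nhds X (ballTopology d) y) := by
  refine tendsto_nhds_generateFrom_iff.2 ?_
  rintro _ ⟨x, ε, -, rfl⟩ (hy : d x y < ε)
  filter_upwards [hu _ (sub_pos.2 hy)] with i hi
  calc d x (u i) ≤ d x y + d y (u i) := hd.2.2.2 _ _ _
    _ < ε := by rw [hd.2.2.1 y]; exact lt_sub_iff_add_lt'.1 hi

theorem IsCauchyComplete.subtype {K : Type} [LinearOrder K] [Nonempty K] (hd : IsGMetric d)
    (hcomplete : IsCauchyComplete K d) {Y : Set X} (hY : IsClosed[ballTopology d] Y) :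
    IsCauchyComplete K fun a b : Y => d a b := by
  let := ballTopology d
  intro x hx
  obtain ⟨y, hy⟩ := hcomplete (fun β => x β) hx
  have hlim : Tendsto (fun β => (x β : X)) atTop (𝓝 y) :=
    tendsto_ballTopology hd fun ε hε => eventually_atTop.2 (hy ε hε)
  exact ⟨⟨y, hY.mem_of_tendsto hlim (Eventually.of_forall fun β => (x β).2)⟩, hy⟩

end GMetric

theorem closed_subspace_GPolish_general {K G X : Type} [LinearOrder K]
    [AddCommGroup G] [LinearOrder G] [IsOrderedAddMonoid G] [TopologicalSpace X]
    (huncount : Cardinal.aleph0 < Cardinal.mk K)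
    (hX : IsGPolish K G X) (Y : Set X) (hY : IsClosed Y) :
    IsGPolish K G Y := by
  obtain ⟨⟨B, hB, hBcard⟩, d, hd, htop, hcomplete⟩ := hX
  have : Nonempty K := Cardinal.mk_ne_zero_iff.1 (Cardinal.aleph0_pos.trans huncount).ne'
  exact ⟨⟨_, hB.induced Subtype.val, Cardinal.mk_image_le.trans hBcard⟩, _,
    hd.comp Subtype.val_injective, htop ▸ ballTopology_comp hd _,
    hcomplete.subtype hd (htop ▸ hY)⟩

/-- Let `κ` be an uncountable regular cardinal with `κ^{<κ} = κ` and `G` a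
totally ordered abelian group of degree `κ`.  Then every closed subspace of a `G`-Polish
space is `G`-Polish. -/
theorem closed_subspace_GPolish {K G X : Type} [LinearOrder K] [WellFoundedLT K]
    [AddCommGroup G] [LinearOrder G] [IsOrderedAddMonoid G] [TopologicalSpace X]
    (huncount : Cardinal.aleph0 < Cardinal.mk K) (hreg : (Cardinal.mk K).IsRegular)
    (hpow : (Cardinal.mk K) ^< (Cardinal.mk K) = Cardinal.mk K)
    (r : K → G) (hrdec : StrictAnti r) (hrpos : ∀ α, 0 < r α)
    (hrcoinitial : ∀ ε : G, 0 < ε → ∃ α, r α ≤ ε)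
    (hX : IsGPolish K G X) (Y : Set X) (hY : IsClosed Y) :
    IsGPolish K G Y :=
  closed_subspace_GPolish_general huncount hX Y hY
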